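/- Let c1 > 0 and c2 > 0 and consider the two-player game Γ_2^c in which player 1 has actions {a1,a2,a3}, player 2 has actions {b1,b2,b3}, and payoffs (u_1,u_2) are: (a1,b1)↦(1,1), (a1,b2)↦(0,0), (a1,b3)↦(−7−c1,−7−c2), (a2,b1)↦(0,0), (a2,b2)↦(0,0), (a2,b3)↦(−7,−7), (a3,b1)↦(−7−c1,−7−c2), (a3,b2)↦(−7,−7), (a3,b3)↦(−7,−7). Then the set of Nash equilibria of Γ_2^c is exactly the three pure profiles {(a1,b1), (a2,b2), (a3,b3)}. -/

import Mathlib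

open Filter Topology

section GameDefs

variable {N : Type} [Fintype N] [DecidableEq N] {A : N → Type}
  [∀ i, Fintype (A i)] [∀ i, DecidableEq (A i)]

/-- A mixed-strategy profile: each `σ i` is a probability distribution on `A i`. -/
def IsStrategy (σ : ∀ i, A i → ℝ) : Prop :=
  (∀ i a, 0 ≤ σ i a) ∧ ∀ i, ∑ a, σ i a = 1

/-- An interior profile places positive probability on every action. -/
def Interior (σ : ∀ i, A i → ℝ) : Prop :=
  ∀ i a, 0 < σ i a

/-- Expected utility of player `i` at profile `σ`. -/
noncomputable def expUtil (u : ∀ i : N, (∀ j, A j) → ℝ) (σ : ∀ i, A i → ℝ) (i : N) : ℝ :=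
  ∑ a : ∀ j, A j, u i a * ∏ j, σ j (a j)

/-- Expected utility of player `i` from playing action `ai` against `σ₋ᵢ`. -/
noncomputable def devUtil (u : ∀ i : N, (∀ j, A j) → ℝ) (σ : ∀ i, A i → ℝ)
    (i : N) (ai : A i) : ℝ :=
  expUtil u (Function.update σ i (fun b => if b = ai then (1 : ℝ) else 0)) i

/-- Nash equilibrium. -/
def IsNash (u : ∀ i : N, (∀ j, A j) → ℝ) (σ : ∀ i, A i → ℝ) : Prop :=
  IsStrategy σ ∧ ∀ (i : N) (μ : A i → ℝ), (∀ a, 0 ≤ μ a) → (∑ a, μ a = 1) →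
    expUtil u (Function.update σ i μ) i ≤ expUtil u σ i

/-- Weak payoff monotonicity: differences in behavior reveal differences in payoffs. -/
def WeaklyPayoffMonotone (u : ∀ i : N, (∀ j, A j) → ℝ) (σ : ∀ i, A i → ℝ) : Prop :=
  IsStrategy σ ∧ ∀ (i : N) (ai bi : A i), σ i bi < σ i ai →
    devUtil u σ i bi < devUtil u σ i ai

/-- Payoff monotonicity. -/
def PayoffMonotone (u : ∀ i : N, (∀ j, A j) → ℝ) (σ : ∀ i, A i → ℝ) : Prop :=
  IsStrategy σ ∧ ∀ (i : N) (ai bi : A i),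
    σ i bi ≤ σ i ai ↔ devUtil u σ i bi ≤ devUtil u σ i ai

/-- Pointwise convergence of a sequence of profiles. -/
def ConvergesTo (s : ℕ → ∀ i, A i → ℝ) (σ : ∀ i, A i → ℝ) : Prop :=
  ∀ (i : N) (ai : A i), Tendsto (fun n => s n i ai) atTop (𝓝 (σ i ai))

/-- Empirical equilibrium: a Nash equilibrium that is the limit of weakly payoff
monotone profiles. -/
def IsEmpirical (u : ∀ i : N, (∀ j, A j) → ℝ) (σ : ∀ i, A i → ℝ) : Prop :=
  IsNash u σ ∧ ∃ s : ℕ → ∀ i, A i → ℝ,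
    (∀ n, WeaklyPayoffMonotone u (s n)) ∧ ConvergesTo s σ

/-- Proper equilibrium (Myerson). -/
def IsProper (u : ∀ i : N, (∀ j, A j) → ℝ) (σ : ∀ i, A i → ℝ) : Prop :=
  IsStrategy σ ∧ ∃ s : ℕ → ∀ i, A i → ℝ,
    (∀ n, IsStrategy (s n) ∧ Interior (s n) ∧
      ∀ (i : N) (ai bi : A i),
        devUtil u (s n) i bi < devUtil u (s n) i ai →
          s n i bi ≤ (1 / (n + 1) : ℝ) * s n i ai) ∧
    ConvergesTo s σ

/-- Perfect equilibrium (Selten, in Myerson's formulation). -/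
def IsPerfect (u : ∀ i : N, (∀ j, A j) → ℝ) (σ : ∀ i, A i → ℝ) : Prop :=
  IsStrategy σ ∧ ∃ s : ℕ → ∀ i, A i → ℝ,
    (∀ n, IsStrategy (s n) ∧ Interior (s n) ∧
      ∀ (i : N) (ai : A i), (1 / (n + 1) : ℝ) < s n i ai →
        ∀ bi : A i, devUtil u (s n) i bi ≤ devUtil u (s n) i ai) ∧
    ConvergesTo s σ

/-- `bi` weakly dominates `ai` for player `i`. -/
def WeaklyDominates (u : ∀ i : N, (∀ j, A j) → ℝ) (i : N) (bi ai : A i) : Prop :=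
  (∀ a : ∀ j, A j, u i (Function.update a i ai) ≤ u i (Function.update a i bi)) ∧
  ∃ a : ∀ j, A j, u i (Function.update a i ai) < u i (Function.update a i bi)

/-- Undominated Nash equilibrium. -/
def IsUndominatedNash (u : ∀ i : N, (∀ j, A j) → ℝ) (σ : ∀ i, A i → ℝ) : Prop :=
  IsNash u σ ∧ ∀ (i : N) (ai : A i), 0 < σ i ai →
    ¬ ∃ bi : A i, WeaklyDominates u i bi ai

end GameDefs

/-- A regular quantal response function on a finite set of actions `B`:
interiority, continuity, responsiveness, and monotonicity. -/
def IsRegularQRF {B : Type} [Fintype B] [DecidableEq B]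
    (p : (B → ℝ) → (B → ℝ)) : Prop :=
  (∀ x, (∀ a, 0 < p x a) ∧ ∑ a, p x a = 1) ∧
  Continuous p ∧
  (∀ (x : B → ℝ) (η : ℝ) (a : B), 0 < η →
    p x a < p (Function.update x a (x a + η)) a) ∧
  ∀ (x : B → ℝ) (a b : B), x b < x a → p x b < p x a

section QREDefs

variable {N : Type} [Fintype N] [DecidableEq N] {A : N → Type}
  [∀ i, Fintype (A i)] [∀ i, DecidableEq (A i)]

/-- Quantal response equilibrium with respect to a profile of QRFs `p`. -/
def IsQRE (u : ∀ i : N, (∀ j, A j) → ℝ) (p : ∀ i, (A i → ℝ) → (A i → ℝ))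
    (σ : ∀ i, A i → ℝ) : Prop :=
  ∀ i : N, σ i = p i (fun ai => devUtil u σ i ai)

/-- A sequence of profiles of QRFs is utility maximizing in the limit. -/
def UtilityMaximizingInLimit (u : ∀ i : N, (∀ j, A j) → ℝ)
    (p : ℕ → ∀ i, (A i → ℝ) → (A i → ℝ)) : Prop :=
  ∀ (s : ℕ → ∀ i, A i → ℝ) (σ : ∀ i, A i → ℝ),
    (∀ n, IsQRE u (p n) (s n)) → ConvergesTo s σ → IsNash u σ

/-- `σ` is approachable by regular QRE that are utility maximizing in the limit. -/
def ApproachableByRegularQRE (u : ∀ i : N, (∀ j, A j) → ℝ) (σ : ∀ i, A i → ℝ) : Prop :=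
  ∃ p : ℕ → ∀ i, (A i → ℝ) → (A i → ℝ),
    (∀ n i, IsRegularQRF (p n i)) ∧ UtilityMaximizingInLimit u p ∧
    ∃ s : ℕ → ∀ i, A i → ℝ, (∀ n, IsQRE u (p n) (s n)) ∧ ConvergesTo s σ

end QREDefs

/-- A control cost function (van Damme), bundled with its derivative on `(0,1]`. -/
structure ControlCost where
  f : ℝ → ℝ
  f' : ℝ → ℝ
  hasDeriv : ∀ x ∈ Set.Ioc (0:ℝ) 1, HasDerivWithinAt f (f' x) (Set.Ioc (0:ℝ) 1) x
  contDeriv : ContinuousOn f' (Set.Ioc (0:ℝ) 1)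
  anti : StrictAntiOn f (Set.Ioc (0:ℝ) 1)
  convex : StrictConvexOn ℝ (Set.Ioc (0:ℝ) 1) f
  atOne : f 1 = 0
  blowup : Tendsto f (nhdsWithin 0 (Set.Ioi (0:ℝ))) atTop

/-- The game Γ₂ᶜ (Table 2). Player `0` is player 1 (actions `0 = a1`, `1 = a2`,
`2 = a3`); player `1` is player 2 (actions `0 = b1`, `1 = b2`, `2 = b3`). -/
noncomputable def uGammaC (c1 c2 : ℝ) : ∀ _ : Fin 2, (Fin 2 → Fin 3) → ℝ := fun i a =>
  if i = 0 then
    ![![(1:ℝ), 0, -7 - c1], ![0, 0, -7], ![-7 - c1, -7, -7]] (a 0) (a 1)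
  else
    ![![(1:ℝ), 0, -7 - c2], ![0, 0, -7], ![-7 - c2, -7, -7]] (a 0) (a 1)

/-!
A profile is a Nash equilibrium iff every action in the support of each player's strategy is a
best reply, since a player's payoff is linear in her own strategy. In Γ₂ᶜ the third action is a
best reply only against the pure third action of the opponent: against `b1` and `b2` it is strictly
worse than `a2`. So if either player puts weight on her third action, both play it purely.
Otherwise, if player 2 puts weight on `b1`, then `a1` is player 1's unique best reply, and then
`b1` is player 2's; by symmetry the only remaining profile is `(a2, b2)`.
-/

def MaximizedOnSupport {α : Type*} (v p : α → ℝ) : Prop :=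
  ∀ a b, 0 < p a → v b ≤ v a

section Distributions

variable {α : Type*} {v p : α → ℝ}

theorem maximizedOnSupport_single [DecidableEq α] {k : α} (hk : ∀ b, v b ≤ v k) :
    MaximizedOnSupport v (Pi.single k 1) := by
  intro a b ha
  obtain rfl : a = k := by
    by_contra hak
    simp [hak] at ha
  exact hk b

variable [Fintype α]

theorem forall_sum_mul_le_iff [DecidableEq α] {s : ℝ} :
    (∀ μ : α → ℝ, (∀ a, 0 ≤ μ a) → ∑ a, μ a = 1 → ∑ a, μ a * v a ≤ s) ↔ ∀ b, v b ≤ s := by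
  refine ⟨fun h b => ?_, fun h μ hμ hμ1 => ?_⟩
  · simpa [Pi.single_apply] using
      h (Pi.single b 1) (fun a => by by_cases a = b <;> simp [*]) (by simp)
  · calc ∑ a, μ a * v a ≤ ∑ a, μ a * s := by gcongr with a; exacts [hμ a, h a]
      _ = s := by rw [← Finset.sum_mul, hμ1, one_mul]

theorem maximizedOnSupport_iff_forall_le_sum (hp : ∀ a, 0 ≤ p a) (hp1 : ∑ a, p a = 1) :
    MaximizedOnSupport v p ↔ ∀ b, v b ≤ ∑ a, p a * v a := by
  refine ⟨fun h b => ?_, fun h a b ha => ?_⟩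
  · calc v b = ∑ a, p a * v b := by rw [← Finset.sum_mul, hp1, one_mul]
      _ ≤ ∑ a, p a * v a := Finset.sum_le_sum fun a _ => by
        rcases (hp a).eq_or_lt with hpa | hpa
        · simp [← hpa]
        · exact mul_le_mul_of_nonneg_left (h a b hpa) hpa.le
  · by_contra! hab
    have : Nonempty α := ⟨a⟩
    obtain ⟨m, hm⟩ := Finite.exists_max v
    have : ∑ c, p c * v c < ∑ c, p c * v m :=
      Finset.sum_lt_sum (fun c _ => mul_le_mul_of_nonneg_left (hm c) (hp c))
        ⟨a, Finset.mem_univ a, mul_lt_mul_of_pos_left (hab.trans_le (hm b)) ha⟩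
    rw [← Finset.sum_mul, hp1, one_mul] at this
    exact (h m).not_gt this

theorem eq_single_of_apply_eq_one [DecidableEq α] {k : α} (hp : ∀ a, 0 ≤ p a)
    (hp1 : ∑ a, p a = 1) (hk : p k = 1) : p = Pi.single k 1 := by
  have hrest : ∑ a ∈ Finset.univ.erase k, p a = 0 := by
    linarith [Finset.add_sum_erase Finset.univ p (Finset.mem_univ k)]
  ext j
  rcases eq_or_ne j k with rfl | hjk
  · simp [hk]
  · rw [Pi.single_eq_of_ne hjk]
    exact (Finset.sum_eq_zero_iff_of_nonneg (fun a _ => hp a)).1 hrest j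
      (Finset.mem_erase.2 ⟨hjk, Finset.mem_univ j⟩)

end Distributions

section NormalForm

variable {N : Type} [Fintype N] [DecidableEq N] {A : N → Type}
  [∀ i, Fintype (A i)] [∀ i, DecidableEq (A i)]
  (u : ∀ i : N, (∀ j, A j) → ℝ) (σ : ∀ i, A i → ℝ)

omit [∀ i, Fintype (A i)] [∀ i, DecidableEq (A i)] in
theorem prod_update_apply (i : N) (ν : A i → ℝ) (x : ∀ j, A j) :
    ∏ j, Function.update σ i ν j (x j) = ν (x i) * ∏ j ∈ Finset.univ.erase i, σ j (x j) := by
  rw [← Finset.mul_prod_erase _ _ (Finset.mem_univ i), Function.update_self]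
  refine congrArg _ (Finset.prod_congr rfl fun j hj => ?_)
  rw [Function.update_of_ne (Finset.ne_of_mem_erase hj)]

theorem expUtil_update_self (i : N) (μ : A i → ℝ) :
    expUtil u (Function.update σ i μ) i = ∑ a, μ a * devUtil u σ i a := by
  simp only [devUtil, expUtil, prod_update_apply, Finset.mul_sum]
  rw [Finset.sum_comm]
  refine Finset.sum_congr rfl fun x _ => ?_
  simp only [eq_comm (a := x i), mul_ite, ite_mul, one_mul, mul_zero, zero_mul,
    Finset.sum_ite_eq', Finset.mem_univ, ↓reduceIte]
  ring

theorem expUtil_eq_sum_devUtil (i : N) : expUtil u σ i = ∑ a, σ i a * devUtil u σ i a := by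
  simpa using expUtil_update_self u σ i (σ i)

theorem isNash_iff_maximizedOnSupport :
    IsNash u σ ↔ IsStrategy σ ∧ ∀ i, MaximizedOnSupport (devUtil u σ i) (σ i) := by
  refine and_congr_right fun hσ => forall_congr' fun i => ?_
  simp only [expUtil_update_self]
  rw [forall_sum_mul_le_iff, expUtil_eq_sum_devUtil,
    maximizedOnSupport_iff_forall_le_sum (hσ.1 i) (hσ.2 i)]

end NormalForm

section TwoPlayer

variable {α : Type} [Fintype α] (u : Fin 2 → (Fin 2 → α) → ℝ) (σ : Fin 2 → α → ℝ)

theorem expUtil_fin_two (i : Fin 2) :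
    expUtil u σ i = ∑ a, ∑ b, u i ![a, b] * (σ 0 a * σ 1 b) := by
  rw [expUtil, ← (finTwoArrowEquiv α).symm.sum_comp, Fintype.sum_prod_type]
  simp [Fin.prod_univ_two]

theorem devUtil_fin_two_zero [DecidableEq α] (a : α) :
    devUtil u σ 0 a = ∑ b, u 0 ![a, b] * σ 1 b := by
  simp [devUtil, expUtil_fin_two]

theorem devUtil_fin_two_one [DecidableEq α] (b : α) :
    devUtil u σ 1 b = ∑ a, u 1 ![a, b] * σ 0 a := by
  simp [devUtil, expUtil_fin_two]

end TwoPlayer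

/-- The payoffs of the three pure actions of a player of Γ₂ᶜ with cost `c` against the
mixed strategy `q` of the opponent; both payoff matrices of Γ₂ᶜ are symmetric, so this describes
either player. -/
def gammaPayoff (c : ℝ) (q : Fin 3 → ℝ) : Fin 3 → ℝ :=
  ![q 0 - (7 + c) * q 2, -7 * q 2, -(7 + c) * q 0 - 7 * q 1 - 7 * q 2]

theorem devUtil_uGammaC_zero (c1 c2 : ℝ) (σ : Fin 2 → Fin 3 → ℝ) :
    devUtil (uGammaC c1 c2) σ 0 = gammaPayoff c1 (σ 1) := by
  funext a
  fin_cases a <;>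
    simp only [devUtil_fin_two_zero, uGammaC, gammaPayoff, Fin.sum_univ_three,
      Fin.reduceFinMk, Matrix.cons_val, ↓reduceIte] <;>
    ring

theorem devUtil_uGammaC_one (c1 c2 : ℝ) (σ : Fin 2 → Fin 3 → ℝ) :
    devUtil (uGammaC c1 c2) σ 1 = gammaPayoff c2 (σ 0) := by
  funext b
  fin_cases b <;>
    simp only [devUtil_fin_two_one, uGammaC, gammaPayoff, Fin.sum_univ_three,
      Fin.reduceFinMk, Matrix.cons_val, one_ne_zero, ↓reduceIte] <;>
    ring

section GammaPayoff

variable {c : ℝ} {p q : Fin 3 → ℝ}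

theorem MaximizedOnSupport.gammaPayoff_eq_one_two (hc : -7 < c) (hq : ∀ a, 0 ≤ q a)
    (hq_sum : ∑ a, q a = 1) (h : MaximizedOnSupport (gammaPayoff c q) p) (hp : 0 < p 2) :
    q 2 = 1 := by
  have h21 := h 2 1 hp
  simp only [gammaPayoff, Matrix.cons_val] at h21
  rw [Fin.sum_univ_three] at hq_sum
  have hq0 : q 0 = 0 := by nlinarith [hq 0, hq 1]
  rw [hq0] at h21
  linarith [hq 1]

theorem MaximizedOnSupport.gammaPayoff_eq_one_zero (hc : -7 < c) (hp : ∀ a, 0 ≤ p a)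
    (hp_sum : ∑ a, p a = 1) (hq : ∀ a, 0 ≤ q a) (hq_sum : ∑ a, q a = 1)
    (h : MaximizedOnSupport (gammaPayoff c q) p) (hq2 : q 2 = 0) (hq0 : 0 < q 0) :
    p 0 = 1 := by
  have hp1 : p 1 ≤ 0 := by
    by_contra! hp1
    have h01 := h 1 0 hp1
    simp only [gammaPayoff, Matrix.cons_val, hq2] at h01
    linarith
  have hp2 : p 2 ≤ 0 := by
    by_contra! hp2
    linarith [h.gammaPayoff_eq_one_two hc hq hq_sum hp2]
  rw [Fin.sum_univ_three] at hp_sum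
  linarith [hp 1, hp 2]

theorem gammaPayoff_single_le (hc : 0 ≤ c) (k b : Fin 3) :
    gammaPayoff c (Pi.single k 1) b ≤ gammaPayoff c (Pi.single k 1) k := by
  fin_cases k <;> fin_cases b <;>
    simp only [gammaPayoff, Fin.reduceFinMk, Matrix.cons_val, Pi.single_eq_same,
      Pi.single_eq_of_ne, ne_eq, Fin.reduceEq, not_false_eq_true, mul_zero, mul_one] <;>
    linarith

end GammaPayoff

theorem gammaPayoff_equilibrium_cases {c1 c2 : ℝ} {p q : Fin 3 → ℝ} (hc1 : -7 < c1)
    (hc2 : -7 < c2) (hp : ∀ a, 0 ≤ p a) (hp1 : ∑ a, p a = 1) (hq : ∀ a, 0 ≤ q a)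
    (hq1 : ∑ a, q a = 1) (h1 : MaximizedOnSupport (gammaPayoff c1 q) p)
    (h2 : MaximizedOnSupport (gammaPayoff c2 p) q) :
    (p 0 = 1 ∧ q 0 = 1) ∨ (p 1 = 1 ∧ q 1 = 1) ∨ (p 2 = 1 ∧ q 2 = 1) := by
  rcases (hp 2).eq_or_lt with hp2 | hp2
  · rcases (hq 2).eq_or_lt with hq2 | hq2
    · rcases (hq 0).eq_or_lt with hq0 | hq0
      · rcases (hp 0).eq_or_lt with hp0 | hp0
        · rw [Fin.sum_univ_three] at hp1 hq1
          exact Or.inr (Or.inl ⟨by linarith, by linarith⟩)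
        · linarith [h2.gammaPayoff_eq_one_zero hc2 hq hq1 hp hp1 hp2.symm hp0]
      · have hp0 := h1.gammaPayoff_eq_one_zero hc1 hp hp1 hq hq1 hq2.symm hq0
        exact Or.inl ⟨hp0, h2.gammaPayoff_eq_one_zero hc2 hq hq1 hp hp1 hp2.symm (hp0 ▸ one_pos)⟩
    · linarith [h2.gammaPayoff_eq_one_two hc2 hp hp1 hq2]
  · have hq2 := h1.gammaPayoff_eq_one_two hc1 hq hq1 hp2
    exact Or.inr (Or.inr ⟨h2.gammaPayoff_eq_one_two hc2 hp hp1 (hq2 ▸ one_pos), hq2⟩)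

/-- for every c1, c2 > 0, the Nash equilibria of Γ₂ᶜ are exactly the
three pure profiles (a1,b1), (a2,b2), (a3,b3). -/
theorem gammaC_nash_set (c1 c2 : ℝ) (hc1 : 0 < c1) (hc2 : 0 < c2)
    (σ : ∀ _ : Fin 2, Fin 3 → ℝ) (hσ : IsStrategy σ) :
    IsNash (uGammaC c1 c2) σ ↔
      ((σ 0 0 = 1 ∧ σ 1 0 = 1) ∨ (σ 0 1 = 1 ∧ σ 1 1 = 1) ∨ (σ 0 2 = 1 ∧ σ 1 2 = 1)) := by
  rw [isNash_iff_maximizedOnSupport, Fin.forall_fin_two, devUtil_uGammaC_zero,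
    devUtil_uGammaC_one, and_iff_right hσ]
  constructor
  · rintro ⟨h1, h2⟩
    exact gammaPayoff_equilibrium_cases (by linarith) (by linarith) (hσ.1 0) (hσ.2 0)
      (hσ.1 1) (hσ.2 1) h1 h2
  · rintro (⟨h0, h1⟩ | ⟨h0, h1⟩ | ⟨h0, h1⟩) <;>
    · rw [eq_single_of_apply_eq_one (hσ.1 0) (hσ.2 0) h0,
        eq_single_of_apply_eq_one (hσ.1 1) (hσ.2 1) h1]
      exact ⟨maximizedOnSupport_single (gammaPayoff_single_le hc1.le _),
        maximizedOnSupport_single (gammaPayoff_single_le hc2.le _)⟩
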